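/- arXiv:2206.05907 — 8 statements merged into one kernel-verified Lean document; each statement's English description precedes it below -/
import Mathlib

section
/- Fix an integer N ≥ 1, a positive integer K, real constants C1 and Csync, and a symmetric matrix J : Fin N → Fin N → ℝ (J i j = J j i). Let F : ℝ → ℝ be differentiable and even, and set S = −F′. For φ : Fin N → ℝ define the energy E(φ) = −(K·C1/2)·Σ_{i} Σ_{j ≠ i} J i j · F(φ i − φ j) − Csync·Σ_i cos(K·φ i), and the vector field V i (φ) = −C1·Σ_{j ≠ i} J i j · S(φ i − φ j) − Csync·sin(K·φ i). Then for every φ and every index i, the partial derivative of E with respect to the i-th coordinate at φ exists and equals −K · V i (φ). -/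
/-!
Moving φ i changes only the pair terms (i, b) and (b, i) and the single term cos (K φ i).
Since F is even, F' is odd, so with J symmetric both pair terms have derivative
J i b F'(φ i − φ b); the resulting factor 2 cancels the 1/2 in the energy.
-/

open Finset Function

lemma Function.Even.deriv {𝕜 E : Type*} [NontriviallyNormedField 𝕜] [NormedAddCommGroup E]
    [NormedSpace 𝕜 E] {f : 𝕜 → E} (hf : f.Even) : (deriv f).Odd := fun x => by
  simpa only [hf.eq, neg_neg] using deriv_comp_neg f (-x)

section

variable {ι 𝕜 : Type*} [DecidableEq ι] [NontriviallyNormedField 𝕜]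

lemma hasDerivAt_apply_update (φ : ι → 𝕜) (i a : ι) (y : 𝕜) :
    HasDerivAt (fun x => update φ i x a) ((Pi.single i 1 : ι → 𝕜) a) y :=
  hasDerivAt_pi.mp (hasDerivAt_update φ i y) a

variable [Fintype ι]

lemma hasDerivAt_sum_comp_update {g : 𝕜 → 𝕜} {g' : 𝕜} (φ : ι → 𝕜) (i : ι)
    (hg : HasDerivAt g g' (φ i)) :
    HasDerivAt (fun x => ∑ a, g (update φ i x a)) g' (φ i) := by
  have hsplit : ∀ x, ∑ a, g (update φ i x a) = g x + ∑ a ∈ univ \ {i}, g (φ a) := fun x => by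
    simp only [← comp_apply (f := g), comp_update, sum_update_of_mem (mem_univ i)]
  simpa only [hsplit] using hg.add_const _

lemma sum_offDiag_mul_single_sub_single {R : Type*} [Ring R] (c : ι → ι → R) (i : ι) :
    ∑ a, ∑ b ∈ univ.erase a, c a b * ((Pi.single i 1 : ι → R) a - (Pi.single i 1 : ι → R) b) =
      ∑ b ∈ univ.erase i, (c i b - c b i) := by
  simp only [mul_sub, sum_sub_distrib, Pi.single_apply, mul_ite, mul_one, mul_zero]
  congr 1
  · simp
  · simp only [sum_ite_eq', mem_erase, mem_univ, and_true]
    rw [← sum_filter]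
    congr 1
    ext
    simp [ne_comm]

lemma hasDerivAt_sum_offDiag_comp_update {W : ι → ι → 𝕜} {G : 𝕜 → 𝕜} (hG : Differentiable 𝕜 G)
    (φ : ι → 𝕜) (i : ι) :
    HasDerivAt (fun x => ∑ a, ∑ b ∈ univ.erase a, W a b * G (update φ i x a - update φ i x b))
      (∑ b ∈ univ.erase i, (W i b * deriv G (φ i - φ b) - W b i * deriv G (φ b - φ i))) (φ i) := by
  have hterm : ∀ a b, HasDerivAt (fun x => W a b * G (update φ i x a - update φ i x b))
      (W a b * deriv G (φ a - φ b) *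
        ((Pi.single i 1 : ι → 𝕜) a - (Pi.single i 1 : ι → 𝕜) b)) (φ i) := fun a b => by
    have hdiff := (hasDerivAt_apply_update φ i a (φ i)).sub (hasDerivAt_apply_update φ i b (φ i))
    have hcomp := (hG (φ a - φ b)).hasDerivAt.comp_of_eq (φ i) hdiff (by simp)
    exact (hcomp.const_mul (W a b)).congr_deriv (mul_assoc _ _ _).symm
  refine (HasDerivAt.fun_sum fun a _ => HasDerivAt.fun_sum fun b _ => hterm a b).congr_deriv ?_
  exact sum_offDiag_mul_single_sub_single _ i

end

theorem stmt_0_general (N : ℕ) (K : ℕ) (C1 Csync : ℝ)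
    (J : Fin N → Fin N → ℝ) (hJ : ∀ i j, J i j = J j i)
    (F : ℝ → ℝ) (hF : Differentiable ℝ F) (hFeven : ∀ x, F (-x) = F x)
    (S : ℝ → ℝ) (hS : ∀ x, S x = -(deriv F x))
    (E : (Fin N → ℝ) → ℝ)
    (hE : ∀ φ : Fin N → ℝ, E φ =
      -((K : ℝ) * C1 / 2) * ∑ a, ∑ b ∈ Finset.univ.erase a, J a b * F (φ a - φ b)
        - Csync * ∑ a, Real.cos ((K : ℝ) * φ a))
    (V : Fin N → (Fin N → ℝ) → ℝ)
    (hV : ∀ (i : Fin N) (φ : Fin N → ℝ), V i φ =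
      -C1 * ∑ j ∈ Finset.univ.erase i, J i j * S (φ i - φ j)
        - Csync * Real.sin ((K : ℝ) * φ i))
    (φ : Fin N → ℝ) (i : Fin N) :
    HasDerivAt (fun x : ℝ => E (Function.update φ i x)) (-(K : ℝ) * V i φ) (φ i) := by
  have hpair := hasDerivAt_sum_offDiag_comp_update (W := J) hF φ i
  have hcos := hasDerivAt_sum_comp_update φ i
    ((Real.hasDerivAt_cos _).comp (φ i) ((hasDerivAt_id (φ i)).const_mul (K : ℝ)))
  have hforce : ∑ b ∈ univ.erase i, (J i b * deriv F (φ i - φ b) - J b i * deriv F (φ b - φ i)) =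
      -2 * ∑ b ∈ univ.erase i, J i b * S (φ i - φ b) := by
    rw [mul_sum]
    refine sum_congr rfl fun b _ => ?_
    rw [hJ b i, ← neg_sub (φ i) (φ b), Function.Even.deriv hFeven, hS]
    ring
  simp only [hE]
  refine ((hpair.const_mul _).sub (hcos.const_mul Csync)).congr_deriv ?_
  rw [hforce, hV, id_eq, mul_one]
  ring

/-- the partial derivative of the oscillator energy `E` with respect to
the `i`-th coordinate at `φ` exists and equals `−K · V i φ`, where `V` is the
oscillator vector field and `S = −F′`. -/
theorem stmt_0 (N : ℕ) (hN : 1 ≤ N) (K : ℕ) (hK : 0 < K) (C1 Csync : ℝ)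
    (J : Fin N → Fin N → ℝ) (hJ : ∀ i j, J i j = J j i)
    (F : ℝ → ℝ) (hF : Differentiable ℝ F) (hFeven : ∀ x, F (-x) = F x)
    (S : ℝ → ℝ) (hS : ∀ x, S x = -(deriv F x))
    (E : (Fin N → ℝ) → ℝ)
    (hE : ∀ φ : Fin N → ℝ, E φ =
      -((K : ℝ) * C1 / 2) * ∑ a, ∑ b ∈ Finset.univ.erase a, J a b * F (φ a - φ b)
        - Csync * ∑ a, Real.cos ((K : ℝ) * φ a))
    (V : Fin N → (Fin N → ℝ) → ℝ)
    (hV : ∀ (i : Fin N) (φ : Fin N → ℝ), V i φ =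
      -C1 * ∑ j ∈ Finset.univ.erase i, J i j * S (φ i - φ j)
        - Csync * Real.sin ((K : ℝ) * φ i))
    (φ : Fin N → ℝ) (i : Fin N) :
    HasDerivAt (fun x : ℝ => E (Function.update φ i x)) (-(K : ℝ) * V i φ) (φ i) :=
  stmt_0_general N K C1 Csync J hJ F hF hFeven S hS E hE V hV φ i
end

section
/- Fix an integer N ≥ 1, real constants C1 and Csync, and a symmetric matrix J : Fin N → Fin N → ℝ. Define the MaxCut oscillator energy E(φ) = −C1·Σ_{i} Σ_{j ≠ i} J i j · cos(φ i − φ j) − Csync·Σ_i cos(2·φ i). If φ : ℝ → (Fin N → ℝ) is differentiable and satisfies the Kuramoto dynamics with second-harmonic injection (φ i)′(t) = −C1·Σ_{j ≠ i} J i j · sin(φ i (t) − φ j (t)) − Csync·sin(2·φ i (t)) for all t and i, then for every t the derivative of t ↦ E(φ(t)) exists and equals −2·Σ_i ((φ i)′(t))², which is ≤ 0. -/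
/-!
The Kuramoto field with second-harmonic injection is minus one half of the gradient of the
MaxCut energy: differentiating `cos (φ a - φ b)` produces each antisymmetric coupling term
`J a b * sin (φ a - φ b)` twice (once from `a`, once from `b`), and `cos (2 φ a)` produces the
factor `2` directly. Hence along a trajectory `dE/dt = ⟨∇E, φ'⟩ = -2 ‖φ'‖² ≤ 0`.
-/

open Finset Real

variable {ι : Type*} [Fintype ι] {x : ℝ → ι → ℝ} {x' : ι → ℝ} {t : ℝ}

theorem hasDerivAt_sum_cos_two_mul (hx : ∀ i, HasDerivAt (fun s => x s i) (x' i) t) :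
    HasDerivAt (fun s => ∑ a, cos (2 * x s a)) (-2 * ∑ a, sin (2 * x t a) * x' a) t := by
  refine (HasDerivAt.fun_sum fun a (_ : a ∈ univ) =>
    ((hx a).const_mul 2).cos).congr_deriv ?_
  rw [mul_sum]
  exact sum_congr rfl fun a _ => by ring

variable [DecidableEq ι]

noncomputable def maxCutEnergy (C1 Csync : ℝ) (J : ι → ι → ℝ) (x : ι → ℝ) : ℝ :=
  -C1 * ∑ a, ∑ b ∈ univ.erase a, J a b * cos (x a - x b) - Csync * ∑ a, cos (2 * x a)

noncomputable def kuramotoField (C1 Csync : ℝ) (J : ι → ι → ℝ) (x : ι → ℝ) (i : ι) :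
    ℝ :=
  -C1 * ∑ j ∈ univ.erase i, J i j * sin (x i - x j) - Csync * sin (2 * x i)

theorem sum_sum_erase_mul_sub_of_antisymm {K : ι → ι → ℝ} (hK : ∀ a b, K b a = -K a b)
    (v : ι → ℝ) :
    ∑ a, ∑ b ∈ univ.erase a, K a b * (v a - v b) =
      2 * ∑ a, (∑ b ∈ univ.erase a, K a b) * v a := by
  have hdiag : ∀ a, K a a = 0 := fun a => by linarith [hK a a]
  have hrow : ∀ a, ∑ b ∈ univ.erase a, K a b = ∑ b, K a b := fun a => sum_erase _ (hdiag a)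
  have hrow' : ∀ a, ∑ b ∈ univ.erase a, K a b * (v a - v b) = ∑ b, K a b * (v a - v b) :=
    fun a => sum_erase _ (by simp [hdiag])
  have hswap : ∑ a, ∑ b, K a b * v b = -∑ a, ∑ b, K a b * v a := by
    rw [sum_comm, ← sum_neg_distrib]
    refine sum_congr rfl fun a _ => ?_
    rw [← sum_neg_distrib]
    refine sum_congr rfl fun b _ => ?_
    rw [hK]
    ring
  simp only [hrow, hrow']
  simp only [mul_sub, sum_sub_distrib, hswap, sum_mul]
  ring

theorem hasDerivAt_sum_sum_erase_cos_sub {J : ι → ι → ℝ} (hJ : ∀ a b, J a b = J b a)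
    (hx : ∀ i, HasDerivAt (fun s => x s i) (x' i) t) :
    HasDerivAt (fun s => ∑ a, ∑ b ∈ univ.erase a, J a b * cos (x s a - x s b))
      (-2 * ∑ a, (∑ b ∈ univ.erase a, J a b * sin (x t a - x t b)) * x' a) t := by
  have hsum := HasDerivAt.fun_sum fun a (_ : a ∈ univ) =>
    HasDerivAt.fun_sum fun b (_ : b ∈ univ.erase a) =>
      (((hx a).fun_sub (hx b)).cos).const_mul (J a b)
  have hanti : ∀ a b, J b a * sin (x t b - x t a) = -(J a b * sin (x t a - x t b)) := by
    intro a b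
    rw [hJ b a, ← neg_sub (x t a) (x t b), sin_neg, mul_neg]
  refine hsum.congr_deriv ?_
  symm
  calc -2 * ∑ a, (∑ b ∈ univ.erase a, J a b * sin (x t a - x t b)) * x' a
      = -∑ a, ∑ b ∈ univ.erase a, J a b * sin (x t a - x t b) * (x' a - x' b) := by
        rw [sum_sum_erase_mul_sub_of_antisymm
          (K := fun a b => J a b * sin (x t a - x t b)) hanti]
        ring
    _ = _ := by
        simp only [← sum_neg_distrib]
        exact sum_congr rfl fun a _ => sum_congr rfl fun b _ => by ring

theorem hasDerivAt_maxCutEnergy (C1 Csync : ℝ) {J : ι → ι → ℝ}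
    (hJ : ∀ a b, J a b = J b a)
    (hx : ∀ i, HasDerivAt (fun s => x s i) (x' i) t) :
    HasDerivAt (fun s => maxCutEnergy C1 Csync J (x s))
      (-2 * ∑ a, kuramotoField C1 Csync J (x t) a * x' a) t := by
  refine (((hasDerivAt_sum_sum_erase_cos_sub hJ hx).const_mul (-C1)).sub
    ((hasDerivAt_sum_cos_two_mul hx).const_mul Csync)).congr_deriv ?_
  simp only [kuramotoField, sub_mul, sum_sub_distrib, mul_assoc, ← mul_sum]
  ring

theorem stmt_3_general (N : ℕ) (C1 Csync : ℝ)
    (J : Fin N → Fin N → ℝ) (hJ : ∀ i j, J i j = J j i)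
    (E : (Fin N → ℝ) → ℝ)
    (hE : ∀ φ : Fin N → ℝ, E φ =
      -C1 * ∑ a, ∑ b ∈ Finset.univ.erase a, J a b * Real.cos (φ a - φ b)
        - Csync * ∑ a, Real.cos (2 * φ a))
    (φ : ℝ → Fin N → ℝ) (hφ : Differentiable ℝ φ)
    (hdyn : ∀ (t : ℝ) (i : Fin N), deriv (fun s => φ s i) t =
      -C1 * ∑ j ∈ Finset.univ.erase i, J i j * Real.sin (φ t i - φ t j)
        - Csync * Real.sin (2 * φ t i))
    (t : ℝ) :
    HasDerivAt (fun s => E (φ s))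
      (-2 * ∑ i, (deriv (fun s => φ s i) t) ^ 2) t ∧
    -2 * ∑ i, (deriv (fun s => φ s i) t) ^ 2 ≤ 0 := by
  have hEnergy : E = maxCutEnergy C1 Csync J := funext hE
  have hField : kuramotoField C1 Csync J (φ t) = fun i => deriv (fun s => φ s i) t :=
    funext fun i => (hdyn t i).symm
  have hφ' : ∀ i, HasDerivAt (fun s => φ s i) (deriv (fun s => φ s i) t) t :=
    fun i => (differentiable_pi.mp hφ i t).hasDerivAt
  have hLyapunov := hasDerivAt_maxCutEnergy C1 Csync hJ hφ'
  rw [hField] at hLyapunov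
  simp only [← sq] at hLyapunov
  refine ⟨hEnergy ▸ hLyapunov, ?_⟩
  linarith [sum_nonneg fun i (_ : i ∈ univ) => sq_nonneg (deriv (fun s => φ s i) t)]

/-- the MaxCut oscillator energy is a Lyapunov function for the
Kuramoto dynamics with second-harmonic injection:
`d/dt E(φ(t)) = −2·Σ_i ((φ i)′(t))² ≤ 0`. -/
theorem stmt_3 (N : ℕ) (hN : 1 ≤ N) (C1 Csync : ℝ)
    (J : Fin N → Fin N → ℝ) (hJ : ∀ i j, J i j = J j i)
    (E : (Fin N → ℝ) → ℝ)
    (hE : ∀ φ : Fin N → ℝ, E φ =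
      -C1 * ∑ a, ∑ b ∈ Finset.univ.erase a, J a b * Real.cos (φ a - φ b)
        - Csync * ∑ a, Real.cos (2 * φ a))
    (φ : ℝ → Fin N → ℝ) (hφ : Differentiable ℝ φ)
    (hdyn : ∀ (t : ℝ) (i : Fin N), deriv (fun s => φ s i) t =
      -C1 * ∑ j ∈ Finset.univ.erase i, J i j * Real.sin (φ t i - φ t j)
        - Csync * Real.sin (2 * φ t i))
    (t : ℝ) :
    HasDerivAt (fun s => E (φ s))
      (-2 * ∑ i, (deriv (fun s => φ s i) t) ^ 2) t ∧
    -2 * ∑ i, (deriv (fun s => φ s i) t) ^ 2 ≤ 0 :=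
  stmt_3_general N C1 Csync J hJ E hE φ hφ hdyn t
end

section
/- Fix an integer K ≥ 2. For σ > 0 define f_σ : ℝ → ℝ by f_σ(x) = Σ_{k=1}^{K−1} [ ((2k−1)π − 2kπ/K)·exp(−(x − 2kπ/K)²/(2σ²)) + (2kπ/K − (2k−1)π)·exp(−(x + 2kπ/K)²/(2σ²)) ]. Then for every x ∈ ℝ, f_σ is differentiable at x, and the derivative f_σ′(x) tends to 0 as σ tends to 0 from the right. -/
/-!
The derivative at `x` of the Gaussian `exp (-(y - a) ^ 2 / (2 * σ ^ 2))` is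
`-(x - a) / σ ^ 2 * exp (-(x - a) ^ 2 / (2 * σ ^ 2))`. For `x ≠ a`, substituting `t = σ⁻²` turns it
into a multiple of `t * exp (-(x - a) ^ 2 / 2 * t)`, which tends to `0` as `t → ∞`; for `x = a` it
vanishes identically. Hence the derivative of any finite combination of such Gaussians tends to `0`
as `σ → 0` (from either side), and `f σ` is one of them.
-/

open Real Filter Topology

-- At `σ = 0` both sides degenerate consistently (`_ / 0 = 0`), so `σ` is unrestricted.
theorem hasDerivAt_exp_neg_sq_div (a σ x : ℝ) :
    HasDerivAt (fun y => exp (-(y - a) ^ 2 / (2 * σ ^ 2)))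
      (exp (-(x - a) ^ 2 / (2 * σ ^ 2)) * (-(x - a) / σ ^ 2)) x := by
  have hsq : HasDerivAt (fun y => -(y - a) ^ 2 / (2 * σ ^ 2)) (-(x - a) / σ ^ 2) x := by
    refine ((((hasDerivAt_id' x).sub_const a).fun_pow 2).fun_neg.div_const _).congr_deriv ?_
    simp only [Nat.cast_ofNat, Nat.add_one_sub_one, pow_one, mul_one, neg_div,
      mul_div_mul_left _ _ (two_ne_zero (α := ℝ))]
  exact (Real.hasDerivAt_exp _).comp x hsq

theorem tendsto_sq_nhdsNE_zero_nhdsGT_zero :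
    Tendsto (fun σ : ℝ => σ ^ 2) (𝓝[≠] 0) (𝓝[>] 0) :=
  tendsto_nhdsWithin_iff.2
    ⟨((continuous_pow 2).tendsto' 0 0 (zero_pow two_ne_zero)).mono_left nhdsWithin_le_nhds,
      eventually_nhdsWithin_of_forall fun _ hσ => pow_two_pos_of_ne_zero hσ⟩

theorem tendsto_exp_neg_sq_div_mul_div_sq_nhdsNE_zero (a x : ℝ) :
    Tendsto (fun σ => exp (-(x - a) ^ 2 / (2 * σ ^ 2)) * (-(x - a) / σ ^ 2)) (𝓝[≠] 0) (𝓝 0) := by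
  rcases eq_or_ne x a with rfl | hxa
  · simp
  have hb : 0 < (x - a) ^ 2 / 2 := by have := sub_ne_zero.2 hxa; positivity
  have h := ((tendsto_rpow_mul_exp_neg_mul_atTop_nhds_zero 1 _ hb).const_mul (-(x - a))).comp
    tendsto_sq_nhdsNE_zero_nhdsGT_zero.inv_tendsto_nhdsGT_zero
  rw [mul_zero] at h
  refine h.congr fun σ => ?_
  simp only [Function.comp_apply, Pi.inv_apply, rpow_one]
  ring_nf

noncomputable def gaussianSum {ι : Type*} (s : Finset ι) (w a : ι → ℝ) (σ y : ℝ) : ℝ :=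
  ∑ i ∈ s, w i * exp (-(y - a i) ^ 2 / (2 * σ ^ 2))

section gaussianSum

variable {ι : Type*} (s : Finset ι) (w a : ι → ℝ)

theorem hasDerivAt_gaussianSum (σ x : ℝ) :
    HasDerivAt (gaussianSum s w a σ)
      (∑ i ∈ s, w i * (exp (-(x - a i) ^ 2 / (2 * σ ^ 2)) * (-(x - a i) / σ ^ 2))) x :=
  HasDerivAt.fun_sum fun i _ => (hasDerivAt_exp_neg_sq_div (a i) σ x).const_mul (w i)

theorem differentiable_gaussianSum (σ : ℝ) : Differentiable ℝ (gaussianSum s w a σ) :=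
  fun x => (hasDerivAt_gaussianSum s w a σ x).differentiableAt

theorem tendsto_deriv_gaussianSum_nhdsNE_zero (x : ℝ) :
    Tendsto (fun σ => deriv (gaussianSum s w a σ) x) (𝓝[≠] 0) (𝓝 0) := by
  simp_rw [(hasDerivAt_gaussianSum s w a _ x).deriv]
  simpa using tendsto_finsetSum s fun i _ =>
    (tendsto_exp_neg_sq_div_mul_div_sq_nhdsNE_zero (a i) x).const_mul (w i)

end gaussianSum

theorem stmt_7_general (K : ℕ)
    (f : ℝ → ℝ → ℝ)
    (hf : ∀ (σ : ℝ) (y : ℝ), f σ y = ∑ k ∈ Finset.Icc 1 (K - 1),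
      (((2 * (k : ℝ) - 1) * Real.pi - 2 * (k : ℝ) * Real.pi / K) *
          Real.exp (-(y - 2 * (k : ℝ) * Real.pi / K) ^ 2 / (2 * σ ^ 2)) +
        (2 * (k : ℝ) * Real.pi / K - (2 * (k : ℝ) - 1) * Real.pi) *
          Real.exp (-(y + 2 * (k : ℝ) * Real.pi / K) ^ 2 / (2 * σ ^ 2))))
    (x : ℝ) :
    (∀ σ : ℝ, 0 < σ → DifferentiableAt ℝ (f σ) x) ∧
    Filter.Tendsto (fun σ : ℝ => deriv (f σ) x)
      (nhdsWithin 0 (Set.Ioi 0)) (nhds 0) := by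
  set s := Finset.Icc 1 (K - 1)
  set a : ℕ → ℝ := fun k => 2 * k * π / K
  set c : ℕ → ℝ := fun k => (2 * k - 1) * π - 2 * k * π / K
  have hf_split : ∀ σ, f σ = gaussianSum s c a σ + gaussianSum s (-c) (-a) σ := by
    intro σ
    funext y
    rw [hf, Pi.add_apply, gaussianSum, gaussianSum, ← Finset.sum_add_distrib]
    refine Finset.sum_congr rfl fun k _ => ?_
    simp only [c, a, Pi.neg_apply, neg_sub, sub_neg_eq_add]
  have hdiff := differentiable_gaussianSum s
  refine ⟨fun σ _ => hf_split σ ▸ ((hdiff c a σ).add (hdiff (-c) (-a) σ)) x, ?_⟩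
  have hderiv : ∀ σ, deriv (f σ) x =
      deriv (gaussianSum s c a σ) x + deriv (gaussianSum s (-c) (-a) σ) x := fun σ => by
    rw [hf_split, deriv_add (hdiff c a σ x) (hdiff (-c) (-a) σ x)]
  simp_rw [hderiv]
  simpa using ((tendsto_deriv_gaussianSum_nhdsNE_zero s c a x).add
    (tendsto_deriv_gaussianSum_nhdsNE_zero s (-c) (-a) x)).mono_left (nhdsGT_le_nhdsNE 0)

/-- the Gaussian-sum Max-K-Cut coupling function `f_σ` is differentiable
at every point, and its derivative at every point tends to `0` as `σ → 0⁺`. -/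
theorem stmt_7 (K : ℕ) (hK : 2 ≤ K)
    (f : ℝ → ℝ → ℝ)
    (hf : ∀ (σ : ℝ) (y : ℝ), f σ y = ∑ k ∈ Finset.Icc 1 (K - 1),
      (((2 * (k : ℝ) - 1) * Real.pi - 2 * (k : ℝ) * Real.pi / K) *
          Real.exp (-(y - 2 * (k : ℝ) * Real.pi / K) ^ 2 / (2 * σ ^ 2)) +
        (2 * (k : ℝ) * Real.pi / K - (2 * (k : ℝ) - 1) * Real.pi) *
          Real.exp (-(y + 2 * (k : ℝ) * Real.pi / K) ^ 2 / (2 * σ ^ 2))))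
    (x : ℝ) :
    (∀ σ : ℝ, 0 < σ → DifferentiableAt ℝ (f σ) x) ∧
    Filter.Tendsto (fun σ : ℝ => deriv (f σ) x)
      (nhdsWithin 0 (Set.Ioi 0)) (nhds 0) :=
  stmt_7_general K f hf x
end

section
/- Fix integers N ≥ 1 and K ≥ 2, let Adj : Fin N → Fin N → Prop be a symmetric irreflexive adjacency relation (a finite simple graph), and set J i j = −1 if Adj i j and J i j = 0 otherwise. Let f_K : ℝ → ℝ be defined by: f_K(x) = (2m−1)π − 2mπ/K if x = 2mπ/K for some integer m with 1 ≤ m ≤ K−1; f_K(x) = −((2m−1)π − 2mπ/K) if x = −2mπ/K for some integer m with 1 ≤ m ≤ K−1; and f_K(x) = 0 otherwise. For an assignment c : Fin N → {1, …, K}, set θ i = 2π·c(i)/K and define H(c) = −Σ_{i<j} J i j · cos(θ i − θ j + f_K(θ i − θ j)). Then H(c) = (number of edges of the graph) − 2·(number of edges {i, j} with c(i) ≠ c(j)). -/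
/-- on discrete set assignments `c : Fin N → {1, …, K}`, the
Max-K-Cut objective `H(c)` equals the number of edges of the graph minus twice
the number of cut edges (edges whose endpoints get different assignments). -/
theorem stmt_10 (N K : ℕ) (hN : 1 ≤ N) (hK : 2 ≤ K)
    (Adj : Fin N → Fin N → Prop) [DecidableRel Adj]
    (hsymm : ∀ i j, Adj i j → Adj j i) (hirr : ∀ i, ¬ Adj i i)
    (J : Fin N → Fin N → ℝ)
    (hJ : ∀ i j, J i j = if Adj i j then -1 else 0)
    (fK : ℝ → ℝ)
    (hfK₁ : ∀ m : ℕ, 1 ≤ m → m ≤ K - 1 →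
      fK (2 * (m : ℝ) * Real.pi / K) =
        (2 * (m : ℝ) - 1) * Real.pi - 2 * (m : ℝ) * Real.pi / K)
    (hfK₂ : ∀ m : ℕ, 1 ≤ m → m ≤ K - 1 →
      fK (-(2 * (m : ℝ) * Real.pi / K)) =
        -((2 * (m : ℝ) - 1) * Real.pi - 2 * (m : ℝ) * Real.pi / K))
    (hfK₀ : ∀ x : ℝ, (∀ m : ℕ, 1 ≤ m → m ≤ K - 1 →
      x ≠ 2 * (m : ℝ) * Real.pi / K ∧ x ≠ -(2 * (m : ℝ) * Real.pi / K)) → fK x = 0)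
    (c : Fin N → ℕ) (hc : ∀ i, 1 ≤ c i ∧ c i ≤ K)
    (θ : Fin N → ℝ) (hθ : ∀ i, θ i = 2 * Real.pi * (c i : ℝ) / K) :
    -(∑ i, ∑ j ∈ Finset.univ.filter (fun j => i < j),
        J i j * Real.cos (θ i - θ j + fK (θ i - θ j))) =
    ((Finset.univ.filter
        (fun p : Fin N × Fin N => p.1 < p.2 ∧ Adj p.1 p.2)).card : ℝ) -
      2 * ((Finset.univ.filter
        (fun p : Fin N × Fin N => p.1 < p.2 ∧ Adj p.1 p.2 ∧ c p.1 ≠ c p.2)).card : ℝ) := by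
  have hKpos : (0:ℝ) < K := by
    have : 0 < K := by omega
    exact_mod_cast this
  have cos_odd : ∀ m : ℕ, Real.cos ((2*(m:ℝ)-1)*Real.pi) = -1 := by
    intro m
    have h : (2*(m:ℝ)-1)*Real.pi = -Real.pi + (m:ℤ) * (2*Real.pi) := by push_cast; ring
    rw [h, Real.cos_add_int_mul_two_pi, Real.cos_neg, Real.cos_pi]
  have hcos : ∀ i j, Real.cos (θ i - θ j + fK (θ i - θ j)) =
      if c i = c j then 1 else -1 := by
    intro i j
    rcases lt_trichotomy (c i) (c j) with h | h | h
    · rw [if_neg h.ne]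
      set m := c j - c i with hm
      have hm1 : 1 ≤ m := by omega
      have hm2 : m ≤ K - 1 := by have h1 := (hc i).1; have h2 := (hc j).2; omega
      have hcast : (m:ℝ) = (c j:ℝ) - (c i:ℝ) := by
        rw [hm, Nat.cast_sub h.le]
      have hd : θ i - θ j = -(2*(m:ℝ)*Real.pi/K) := by
        rw [hθ i, hθ j, hcast]; ring
      rw [hd, hfK₂ m hm1 hm2]
      have : -(2*(m:ℝ)*Real.pi/K) + -((2*(m:ℝ)-1)*Real.pi - 2*(m:ℝ)*Real.pi/K)
          = -((2*(m:ℝ)-1)*Real.pi) := by ring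
      rw [this, Real.cos_neg, cos_odd]
    · rw [if_pos h]
      have hd : θ i - θ j = 0 := by rw [hθ i, hθ j, h]; ring
      have h0 : fK 0 = 0 := by
        apply hfK₀
        intro m hm1 hm2
        have hmpos : (0:ℝ) < m := by exact_mod_cast hm1
        have hpos : 0 < 2*(m:ℝ)*Real.pi/K := by positivity
        constructor
        · intro heq; rw [← heq] at hpos; exact lt_irrefl 0 hpos
        · intro heq
          have : (0:ℝ) < -(0:ℝ) := by rw [heq] at hpos ⊢; linarith
          linarith
      rw [hd, h0, add_zero, Real.cos_zero]
    · rw [if_neg h.ne']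
      set m := c i - c j with hm
      have hm1 : 1 ≤ m := by omega
      have hm2 : m ≤ K - 1 := by have h1 := (hc j).1; have h2 := (hc i).2; omega
      have hcast : (m:ℝ) = (c i:ℝ) - (c j:ℝ) := by
        rw [hm, Nat.cast_sub h.le]
      have hd : θ i - θ j = 2*(m:ℝ)*Real.pi/K := by
        rw [hθ i, hθ j, hcast]; ring
      rw [hd, hfK₁ m hm1 hm2]
      have : 2*(m:ℝ)*Real.pi/K + ((2*(m:ℝ)-1)*Real.pi - 2*(m:ℝ)*Real.pi/K)
          = (2*(m:ℝ)-1)*Real.pi := by ring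
      rw [this, cos_odd]
  have hterm : ∀ i j, J i j * Real.cos (θ i - θ j + fK (θ i - θ j)) =
      (if Adj i j then (-1:ℝ) else 0) * (if c i = c j then 1 else -1) := by
    intro i j; rw [hJ, hcos]
  simp only [hterm, Finset.card_filter, Finset.sum_filter]
  push_cast
  rw [Fintype.sum_prod_type, Fintype.sum_prod_type, Finset.mul_sum, ← Finset.sum_sub_distrib,
    ← Finset.sum_neg_distrib]
  apply Finset.sum_congr rfl
  intro i _
  rw [Finset.mul_sum, ← Finset.sum_sub_distrib, ← Finset.sum_neg_distrib]
  apply Finset.sum_congr rfl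
  intro j _
  by_cases h1 : i < j <;> by_cases h2 : Adj i j <;> by_cases h3 : c i = c j <;>
    simp [h1, h2, h3] <;> norm_num
end

section
/- Fix integers N ≥ 1 and K ≥ 2, a finite simple graph given by a symmetric irreflexive relation Adj on Fin N, and define H(c) for assignments c : Fin N → {1, …, K} as H(c) = −Σ_{i<j} J i j · cos(θ i − θ j + f_K(θ i − θ j)) with J i j = −1 if Adj i j and 0 otherwise, θ i = 2π·c(i)/K, and f_K the function defined by f_K(x) = (2m−1)π − 2mπ/K if x = 2mπ/K (1 ≤ m ≤ K−1), f_K(x) = −((2m−1)π − 2mπ/K) if x = −2mπ/K (1 ≤ m ≤ K−1), and 0 otherwise. Then an assignment c minimizes H over all assignments Fin N → {1, …, K} if and only if c maximizes the cut size, i.e. the number of edges {i, j} with c(i) ≠ c(j), over all such assignments. -/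
open Real Finset

lemma cosval_aux (K : ℕ) (hK : 2 ≤ K) (fK : ℝ → ℝ)
    (hfK₁ : ∀ m : ℕ, 1 ≤ m → m ≤ K - 1 →
      fK (2 * (m : ℝ) * Real.pi / K) =
        (2 * (m : ℝ) - 1) * Real.pi - 2 * (m : ℝ) * Real.pi / K)
    (hfK₂ : ∀ m : ℕ, 1 ≤ m → m ≤ K - 1 →
      fK (-(2 * (m : ℝ) * Real.pi / K)) =
        -((2 * (m : ℝ) - 1) * Real.pi - 2 * (m : ℝ) * Real.pi / K))
    (hfK₀ : ∀ x : ℝ, (∀ m : ℕ, 1 ≤ m → m ≤ K - 1 →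
      x ≠ 2 * (m : ℝ) * Real.pi / K ∧ x ≠ -(2 * (m : ℝ) * Real.pi / K)) → fK x = 0)
    (a b : ℕ) (ha1 : 1 ≤ a) (ha2 : a ≤ K) (hb1 : 1 ≤ b) (hb2 : b ≤ K) :
    Real.cos (2 * Real.pi * (a : ℝ) / K - 2 * Real.pi * (b : ℝ) / K +
      fK (2 * Real.pi * (a : ℝ) / K - 2 * Real.pi * (b : ℝ) / K)) =
      if a = b then 1 else -1 := by
  have hKpos : (0 : ℝ) < K := by positivity
  rcases lt_trichotomy a b with hab | hab | hab
  · -- a < b, x = -(2 m π / K) with m = b - a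
    set m := b - a with hm
    have hm1 : 1 ≤ m := by omega
    have hm2 : m ≤ K - 1 := by omega
    have hcast : ((m : ℝ)) = (b : ℝ) - a := by
      rw [hm]; push_cast [Nat.cast_sub hab.le]; ring
    have hx : 2 * Real.pi * (a : ℝ) / K - 2 * Real.pi * (b : ℝ) / K
        = -(2 * (m : ℝ) * Real.pi / K) := by rw [hcast]; ring
    rw [hx, hfK₂ m hm1 hm2]
    have : -(2 * (m : ℝ) * Real.pi / K) + -((2 * (m : ℝ) - 1) * Real.pi - 2 * (m : ℝ) * Real.pi / K)
        = -((m : ℝ) * (2 * Real.pi) - Real.pi) := by ring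
    rw [this, Real.cos_neg]
    have := Real.cos_int_mul_two_pi_sub_pi (m : ℤ)
    push_cast at this
    rw [this, if_neg hab.ne]
  · -- a = b, x = 0
    subst hab
    have hx : 2 * Real.pi * (a : ℝ) / K - 2 * Real.pi * (a : ℝ) / K = 0 := by ring
    rw [hx, hfK₀ 0, add_zero, Real.cos_zero, if_pos rfl]
    intro m hm1 _
    have hpos : 0 < 2 * (m : ℝ) * Real.pi / K := by
      have : (0:ℝ) < m := by exact_mod_cast hm1
      positivity
    constructor <;> intro h <;> linarith
  · -- b < a
    set m := a - b with hm
    have hm1 : 1 ≤ m := by omega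
    have hm2 : m ≤ K - 1 := by omega
    have hcast : ((m : ℝ)) = (a : ℝ) - b := by
      rw [hm]; push_cast [Nat.cast_sub hab.le]; ring
    have hx : 2 * Real.pi * (a : ℝ) / K - 2 * Real.pi * (b : ℝ) / K
        = 2 * (m : ℝ) * Real.pi / K := by rw [hcast]; ring
    rw [hx, hfK₁ m hm1 hm2]
    have : 2 * (m : ℝ) * Real.pi / K + ((2 * (m : ℝ) - 1) * Real.pi - 2 * (m : ℝ) * Real.pi / K)
        = (m : ℝ) * (2 * Real.pi) - Real.pi := by ring
    rw [this]
    have := Real.cos_int_mul_two_pi_sub_pi (m : ℤ)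
    push_cast at this
    rw [this, if_neg hab.ne']

/-- an assignment `c : Fin N → {1, …, K}` minimizes the Max-K-Cut
objective `H` over all such assignments iff it maximizes the cut size. -/
theorem stmt_11 (N K : ℕ) (hN : 1 ≤ N) (hK : 2 ≤ K)
    (Adj : Fin N → Fin N → Prop) [DecidableRel Adj]
    (hsymm : ∀ i j, Adj i j → Adj j i) (hirr : ∀ i, ¬ Adj i i)
    (J : Fin N → Fin N → ℝ)
    (hJ : ∀ i j, J i j = if Adj i j then -1 else 0)
    (fK : ℝ → ℝ)
    (hfK₁ : ∀ m : ℕ, 1 ≤ m → m ≤ K - 1 →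
      fK (2 * (m : ℝ) * Real.pi / K) =
        (2 * (m : ℝ) - 1) * Real.pi - 2 * (m : ℝ) * Real.pi / K)
    (hfK₂ : ∀ m : ℕ, 1 ≤ m → m ≤ K - 1 →
      fK (-(2 * (m : ℝ) * Real.pi / K)) =
        -((2 * (m : ℝ) - 1) * Real.pi - 2 * (m : ℝ) * Real.pi / K))
    (hfK₀ : ∀ x : ℝ, (∀ m : ℕ, 1 ≤ m → m ≤ K - 1 →
      x ≠ 2 * (m : ℝ) * Real.pi / K ∧ x ≠ -(2 * (m : ℝ) * Real.pi / K)) → fK x = 0)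
    (H : (Fin N → ℕ) → ℝ)
    (hH : ∀ c : Fin N → ℕ, H c =
      -(∑ i, ∑ j ∈ Finset.univ.filter (fun j => i < j),
        J i j * Real.cos (2 * Real.pi * (c i : ℝ) / K - 2 * Real.pi * (c j : ℝ) / K +
          fK (2 * Real.pi * (c i : ℝ) / K - 2 * Real.pi * (c j : ℝ) / K))))
    (cut : (Fin N → ℕ) → ℕ)
    (hcut : ∀ c : Fin N → ℕ, cut c = (Finset.univ.filter
      (fun p : Fin N × Fin N => p.1 < p.2 ∧ Adj p.1 p.2 ∧ c p.1 ≠ c p.2)).card)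
    (c : Fin N → ℕ) (hc : ∀ i, 1 ≤ c i ∧ c i ≤ K) :
    (∀ c' : Fin N → ℕ, (∀ i, 1 ≤ c' i ∧ c' i ≤ K) → H c ≤ H c') ↔
    (∀ c' : Fin N → ℕ, (∀ i, 1 ≤ c' i ∧ c' i ≤ K) → cut c' ≤ cut c) := by
  -- number of edges (as ordered pairs i < j)
  set E : ℕ := (Finset.univ.filter
      (fun p : Fin N × Fin N => p.1 < p.2 ∧ Adj p.1 p.2)).card with hE
  have key : ∀ c' : Fin N → ℕ, (∀ i, 1 ≤ c' i ∧ c' i ≤ K) →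
      H c' = (E : ℝ) - 2 * (cut c' : ℝ) := by
    intro c' hc'
    have hHsum : H c' = ∑ i : Fin N, ∑ j : Fin N,
        (if i < j then (if Adj i j then (if c' i = c' j then (1:ℝ) else -1) else 0) else 0) := by
      rw [hH c', neg_eq_iff_eq_neg, ← Finset.sum_neg_distrib]
      refine Finset.sum_congr rfl fun i _ => ?_
      rw [← Finset.sum_neg_distrib, Finset.sum_filter]
      refine Finset.sum_congr rfl fun j _ => ?_
      by_cases hij : i < j
      · simp only [hij, if_true]
        rw [hJ, cosval_aux K hK fK hfK₁ hfK₂ hfK₀ (c' i) (c' j)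
          (hc' i).1 (hc' i).2 (hc' j).1 (hc' j).2]
        by_cases hA : Adj i j <;> by_cases he : c' i = c' j <;>
          simp [hA, he]
      · simp [hij]
    rw [hHsum]
    have hEsum : (E : ℝ) = ∑ i : Fin N, ∑ j : Fin N,
        (if i < j ∧ Adj i j then (1:ℝ) else 0) := by
      rw [hE, Finset.card_filter]
      push_cast
      rw [Fintype.sum_prod_type]
    have hcutsum : (cut c' : ℝ) = ∑ i : Fin N, ∑ j : Fin N,
        (if i < j ∧ Adj i j ∧ c' i ≠ c' j then (1:ℝ) else 0) := by
      rw [hcut c', Finset.card_filter]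
      push_cast
      rw [Fintype.sum_prod_type]
    rw [hEsum, hcutsum, Finset.mul_sum, ← Finset.sum_sub_distrib]
    refine Finset.sum_congr rfl fun i _ => ?_
    rw [Finset.mul_sum, ← Finset.sum_sub_distrib]
    refine Finset.sum_congr rfl fun j _ => ?_
    by_cases hij : i < j <;> by_cases hA : Adj i j <;> by_cases he : c' i = c' j <;>
      simp [hij, hA, he] <;> norm_num
  constructor
  · intro hmin c' hc'
    have h1 := hmin c' hc'
    rw [key c hc, key c' hc'] at h1
    have : (cut c' : ℝ) ≤ (cut c : ℝ) := by linarith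
    exact_mod_cast this
  · intro hmax c' hc'
    have h1 := hmax c' hc'
    rw [key c hc, key c' hc']
    have : (cut c' : ℝ) ≤ (cut c : ℝ) := by exact_mod_cast h1
    linarith
end

section
/- Fix integers N ≥ 1 and K ≥ 2, a finite simple graph given by a symmetric irreflexive relation Adj on Fin N, and define H(c) for assignments c : Fin N → {1, …, K} as H(c) = −Σ_{i<j} J i j · cos(θ i − θ j + f_K(θ i − θ j)) with J i j = −1 if Adj i j and 0 otherwise, θ i = 2π·c(i)/K, and f_K the function defined by f_K(x) = (2m−1)π − 2mπ/K if x = 2mπ/K (1 ≤ m ≤ K−1), f_K(x) = −((2m−1)π − 2mπ/K) if x = −2mπ/K (1 ≤ m ≤ K−1), and 0 otherwise. Then the graph is K-colorable (i.e. there exists c : Fin N → {1, …, K} with c(i) ≠ c(j) whenever Adj i j) if and only if there exists an assignment c with H(c) = −(number of edges of the graph). -/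
/-- the graph is K-colorable iff some assignment `c : Fin N → {1, …, K}`
attains the objective value `−(number of edges)`. -/
theorem stmt_12 (N K : ℕ) (hN : 1 ≤ N) (hK : 2 ≤ K)
    (Adj : Fin N → Fin N → Prop) [DecidableRel Adj]
    (hsymm : ∀ i j, Adj i j → Adj j i) (hirr : ∀ i, ¬ Adj i i)
    (J : Fin N → Fin N → ℝ)
    (hJ : ∀ i j, J i j = if Adj i j then -1 else 0)
    (fK : ℝ → ℝ)
    (hfK₁ : ∀ m : ℕ, 1 ≤ m → m ≤ K - 1 →
      fK (2 * (m : ℝ) * Real.pi / K) =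
        (2 * (m : ℝ) - 1) * Real.pi - 2 * (m : ℝ) * Real.pi / K)
    (hfK₂ : ∀ m : ℕ, 1 ≤ m → m ≤ K - 1 →
      fK (-(2 * (m : ℝ) * Real.pi / K)) =
        -((2 * (m : ℝ) - 1) * Real.pi - 2 * (m : ℝ) * Real.pi / K))
    (hfK₀ : ∀ x : ℝ, (∀ m : ℕ, 1 ≤ m → m ≤ K - 1 →
      x ≠ 2 * (m : ℝ) * Real.pi / K ∧ x ≠ -(2 * (m : ℝ) * Real.pi / K)) → fK x = 0)
    (H : (Fin N → ℕ) → ℝ)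
    (hH : ∀ c : Fin N → ℕ, H c =
      -(∑ i, ∑ j ∈ Finset.univ.filter (fun j => i < j),
        J i j * Real.cos (2 * Real.pi * (c i : ℝ) / K - 2 * Real.pi * (c j : ℝ) / K +
          fK (2 * Real.pi * (c i : ℝ) / K - 2 * Real.pi * (c j : ℝ) / K)))) :
    (∃ c : Fin N → ℕ, (∀ i, 1 ≤ c i ∧ c i ≤ K) ∧
        ∀ i j, Adj i j → c i ≠ c j) ↔
    (∃ c : Fin N → ℕ, (∀ i, 1 ≤ c i ∧ c i ≤ K) ∧
        H c = -((Finset.univ.filter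
          (fun p : Fin N × Fin N => p.1 < p.2 ∧ Adj p.1 p.2)).card : ℝ)) := by
  have hπ := Real.pi_pos
  have hKR : (0:ℝ) < K := by
    have : 0 < K := by omega
    exact_mod_cast this
  have coshelp : ∀ m : ℕ, Real.cos ((2*(m:ℝ)-1)*Real.pi) = -1 := by
    intro m
    have h : (2*(m:ℝ)-1)*Real.pi = (m:ℝ)*(2*Real.pi) - Real.pi := by ring
    rw [h, Real.cos_nat_mul_two_pi_sub_pi]
  -- Key computation of the cosine value
  have key : ∀ a b : ℕ, 1 ≤ a → a ≤ K → 1 ≤ b → b ≤ K →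
      Real.cos (2 * Real.pi * (a:ℝ) / K - 2 * Real.pi * (b:ℝ) / K +
        fK (2 * Real.pi * (a:ℝ) / K - 2 * Real.pi * (b:ℝ) / K)) =
      if a = b then 1 else -1 := by
    intro a b ha1 haK hb1 hbK
    rcases lt_trichotomy a b with h | h | h
    · rw [if_neg (Nat.ne_of_lt h)]
      have hm1 : 1 ≤ b - a := by omega
      have hm2 : b - a ≤ K - 1 := by omega
      have hcast : ((b - a : ℕ):ℝ) = (b:ℝ) - (a:ℝ) := by
        exact_mod_cast Nat.cast_sub h.le
      have hx : 2 * Real.pi * (a:ℝ) / K - 2 * Real.pi * (b:ℝ) / K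
          = -(2 * ((b - a : ℕ):ℝ) * Real.pi / K) := by
        rw [hcast]; ring
      rw [hx, hfK₂ _ hm1 hm2]
      have harg : -(2 * ((b - a : ℕ):ℝ) * Real.pi / K) +
          -((2 * ((b - a : ℕ):ℝ) - 1) * Real.pi - 2 * ((b - a : ℕ):ℝ) * Real.pi / K)
          = -((2 * ((b - a : ℕ):ℝ) - 1) * Real.pi) := by ring
      rw [harg, Real.cos_neg, coshelp]
    · subst h
      rw [if_pos rfl]
      have h0 : 2 * Real.pi * (a:ℝ) / K - 2 * Real.pi * (a:ℝ) / K = 0 := sub_self _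
      rw [h0]
      have hf0 : fK 0 = 0 := by
        apply hfK₀
        intro m hm1 hm2
        have hmR : (0:ℝ) < (m:ℝ) := by exact_mod_cast Nat.lt_of_lt_of_le Nat.zero_lt_one hm1
        have hpos : 0 < 2 * (m:ℝ) * Real.pi / K := by
          apply div_pos _ hKR
          nlinarith
        exact ⟨hpos.ne, by linarith [neg_neg_of_pos hpos]⟩
      rw [hf0, add_zero, Real.cos_zero]
    · rw [if_neg (Nat.ne_of_gt h)]
      have hm1 : 1 ≤ a - b := by omega
      have hm2 : a - b ≤ K - 1 := by omega
      have hcast : ((a - b : ℕ):ℝ) = (a:ℝ) - (b:ℝ) := by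
        exact_mod_cast Nat.cast_sub h.le
      have hx : 2 * Real.pi * (a:ℝ) / K - 2 * Real.pi * (b:ℝ) / K
          = 2 * ((a - b : ℕ):ℝ) * Real.pi / K := by
        rw [hcast]; ring
      rw [hx, hfK₁ _ hm1 hm2]
      have harg : 2 * ((a - b : ℕ):ℝ) * Real.pi / K +
          ((2 * ((a - b : ℕ):ℝ) - 1) * Real.pi - 2 * ((a - b : ℕ):ℝ) * Real.pi / K)
          = (2 * ((a - b : ℕ):ℝ) - 1) * Real.pi := by ring
      rw [harg, coshelp]
  -- card of the edge set as a double sum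
  have hcard : ((Finset.univ.filter
      (fun p : Fin N × Fin N => p.1 < p.2 ∧ Adj p.1 p.2)).card : ℝ)
      = ∑ i, ∑ j ∈ Finset.univ.filter (fun j => i < j),
          (if Adj i j then (1:ℝ) else 0) := by
    rw [Finset.card_filter]
    push_cast
    rw [Fintype.sum_prod_type]
    refine Finset.sum_congr rfl fun i _ => ?_
    rw [Finset.sum_filter]
    refine Finset.sum_congr rfl fun j _ => ?_
    by_cases h1 : (i : Fin N) < j <;> by_cases h2 : Adj i j <;> simp [h1, h2]
  -- rewrite the energy sum
  have hsum : ∀ c : Fin N → ℕ, (∀ i, 1 ≤ c i ∧ c i ≤ K) →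
      (∑ i, ∑ j ∈ Finset.univ.filter (fun j => i < j),
        J i j * Real.cos (2 * Real.pi * (c i : ℝ) / K - 2 * Real.pi * (c j : ℝ) / K +
          fK (2 * Real.pi * (c i : ℝ) / K - 2 * Real.pi * (c j : ℝ) / K)))
      = ∑ i, ∑ j ∈ Finset.univ.filter (fun j => i < j),
          (if Adj i j then (-1:ℝ) else 0) * (if c i = c j then 1 else -1) := by
    intro c hc
    refine Finset.sum_congr rfl fun i _ => Finset.sum_congr rfl fun j _ => ?_
    rw [hJ, key (c i) (c j) (hc i).1 (hc i).2 (hc j).1 (hc j).2]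
  constructor
  · rintro ⟨c, hc, hcol⟩
    refine ⟨c, hc, ?_⟩
    rw [hH, hsum c hc, hcard, neg_inj]
    refine Finset.sum_congr rfl fun i _ => Finset.sum_congr rfl fun j _ => ?_
    by_cases hA : Adj i j
    · simp [hA, hcol i j hA]
    · simp [hA]
  · rintro ⟨c, hc, hHc⟩
    refine ⟨c, hc, ?_⟩
    rw [hH c, hsum c hc, hcard] at hHc
    have h2 : (∑ i, ∑ j ∈ Finset.univ.filter (fun j => i < j),
        ((if Adj i j then (1:ℝ) else 0) -
          (if Adj i j then (-1:ℝ) else 0) * (if c i = c j then 1 else -1))) = 0 := by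
      simp only [Finset.sum_sub_distrib]
      have := neg_injective hHc
      linarith [neg_injective hHc]
    have hnn : ∀ i j : Fin N,
        (0:ℝ) ≤ (if Adj i j then (1:ℝ) else 0) -
          (if Adj i j then (-1:ℝ) else 0) * (if c i = c j then 1 else -1) := by
      intro i j; split_ifs <;> norm_num
    have h3 := (Finset.sum_eq_zero_iff_of_nonneg (fun i _ =>
      Finset.sum_nonneg fun j _ => hnn i j)).mp h2
    have main : ∀ i j : Fin N, i < j → Adj i j → c i ≠ c j := by
      intro i j hij hA hceq
      have h4 := (Finset.sum_eq_zero_iff_of_nonneg (fun j _ => hnn i j)).mp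
        (h3 i (Finset.mem_univ i)) j (by simp [hij])
      rw [if_pos hA, if_pos hA, if_pos hceq] at h4
      norm_num at h4
    intro i j hA
    rcases lt_trichotomy i j with h | h | h
    · exact main i j h hA
    · exact absurd (h ▸ hA) (hirr i)
    · exact (main j i h (hsymm i j hA)).symm
end

section
/- Fix an integer N ≥ 3, a symmetric matrix D : Fin N → Fin N → ℝ of distances (D i j = D j i), and a bijection p from the cities {1, …, N} to tour positions {1, …, N}. Let θ i = 2π·p(i)/N and let f_TSP : ℝ → ℝ be defined by: f_TSP(x) = −2γπ/N if x = 2γπ/N for some γ ∈ {1, N−1}; f_TSP(x) = 2γπ/N if x = −2γπ/N for some γ ∈ {1, N−1}; f_TSP(x) = π − 2kπ/N if x = 2kπ/N for some integer k with 2 ≤ k ≤ N and k ≠ N−1; f_TSP(x) = 2kπ/N − π if x = −2kπ/N for such k; and f_TSP(x) = 0 otherwise. Define H_TSP(p) = Σ_{i<j} D i j · cos(θ i − θ j + f_TSP(θ i − θ j)) and the tour length L(p) = Σ over pairs i < j with |p(i) − p(j)| ∈ {1, N−1} of D i j. Then H_TSP(p) = 2·L(p) − Σ_{i<j} D i j.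 -/
/-- for a tour given by a bijection `p` of the `N` cities onto the
positions `{1, …, N}` (position of city `i` is `(p i : ℕ) + 1`), the TSP objective
equals twice the tour length minus the sum of all pairwise distances. -/
theorem stmt_16 (N : ℕ) (hN : 3 ≤ N)
    (D : Fin N → Fin N → ℝ) (hD : ∀ i j, D i j = D j i)
    (p : Equiv.Perm (Fin N))
    (θ : Fin N → ℝ)
    (hθ : ∀ i, θ i = 2 * Real.pi * (((p i : ℕ) : ℝ) + 1) / N)
    (fTSP : ℝ → ℝ)
    (h₁ : ∀ γ : ℕ, (γ = 1 ∨ γ = N - 1) →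
      fTSP (2 * (γ : ℝ) * Real.pi / N) = -(2 * (γ : ℝ) * Real.pi / N))
    (h₂ : ∀ γ : ℕ, (γ = 1 ∨ γ = N - 1) →
      fTSP (-(2 * (γ : ℝ) * Real.pi / N)) = 2 * (γ : ℝ) * Real.pi / N)
    (h₃ : ∀ k : ℕ, 2 ≤ k → k ≤ N → k ≠ N - 1 →
      fTSP (2 * (k : ℝ) * Real.pi / N) = Real.pi - 2 * (k : ℝ) * Real.pi / N)
    (h₄ : ∀ k : ℕ, 2 ≤ k → k ≤ N → k ≠ N - 1 →
      fTSP (-(2 * (k : ℝ) * Real.pi / N)) = 2 * (k : ℝ) * Real.pi / N - Real.pi)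
    (h₀ : ∀ x : ℝ, (∀ k : ℕ, 1 ≤ k → k ≤ N →
      x ≠ 2 * (k : ℝ) * Real.pi / N ∧ x ≠ -(2 * (k : ℝ) * Real.pi / N)) → fTSP x = 0)
    (L : ℝ)
    (hL : L = ∑ i, ∑ j ∈ Finset.univ.filter (fun j => i < j),
      if |(((p i : ℕ) : ℤ) + 1) - (((p j : ℕ) : ℤ) + 1)| = 1 ∨
         |(((p i : ℕ) : ℤ) + 1) - (((p j : ℕ) : ℤ) + 1)| = (N : ℤ) - 1
      then D i j else 0) :
    (∑ i, ∑ j ∈ Finset.univ.filter (fun j => i < j),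
        D i j * Real.cos (θ i - θ j + fTSP (θ i - θ j))) =
    2 * L - ∑ i, ∑ j ∈ Finset.univ.filter (fun j => i < j), D i j := by

  have key : ∀ i j : Fin N, i ≠ j →
      Real.cos (θ i - θ j + fTSP (θ i - θ j)) =
      if |(((p i : ℕ) : ℤ) + 1) - (((p j : ℕ) : ℤ) + 1)| = 1 ∨
         |(((p i : ℕ) : ℤ) + 1) - (((p j : ℕ) : ℤ) + 1)| = (N : ℤ) - 1
      then (1 : ℝ) else -1 := by
    intro i j hij
    have hpij : (p i : ℕ) ≠ (p j : ℕ) := by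
      intro h
      exact hij (p.injective (Fin.ext h))
    have hai : (p i : ℕ) < N := (p i).isLt
    have haj : (p j : ℕ) < N := (p j).isLt
    rcases lt_or_gt_of_ne hpij with hlt | hgt
    · -- p i < p j : θ i - θ j = -(2 k π / N) with k = p j - p i
      set a := (p i : ℕ)
      set b := (p j : ℕ)
      set k := b - a with hk
      have hk1 : 1 ≤ k := by omega
      have hkN : k ≤ N - 1 := by omega
      have hkr : (k : ℝ) = (b : ℝ) - (a : ℝ) := by
        rw [hk, Nat.cast_sub hlt.le]
      have hdiff : θ i - θ j = -(2 * (k : ℝ) * Real.pi / N) := by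
        rw [hθ i, hθ j, hkr]; ring
      have hcond : (|((a : ℤ) + 1) - ((b : ℤ) + 1)| = 1 ∨
          |((a : ℤ) + 1) - ((b : ℤ) + 1)| = (N : ℤ) - 1) ↔ (k = 1 ∨ k = N - 1) := by
        rw [abs_sub_comm]
        rw [abs_of_nonneg (by omega : (0:ℤ) ≤ ((b : ℤ) + 1) - ((a : ℤ) + 1))]
        omega
      by_cases hadj : k = 1 ∨ k = N - 1
      · rw [hdiff, h₂ k hadj, if_pos (hcond.mpr hadj)]
        have h0 : -(2 * (k : ℝ) * Real.pi / N) + 2 * (k : ℝ) * Real.pi / N = 0 := by ring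
        rw [h0, Real.cos_zero]
      · have h2k : 2 ≤ k := by omega
        have hkN' : k ≤ N := by omega
        have hne : k ≠ N - 1 := by tauto
        rw [hdiff, h₄ k h2k hkN' hne]
        have : -(2 * (k : ℝ) * Real.pi / N) + (2 * (k : ℝ) * Real.pi / N - Real.pi)
            = -Real.pi := by ring
        rw [this, Real.cos_neg, Real.cos_pi, if_neg (fun h => hadj (hcond.mp h))]
    · -- p i > p j
      set a := (p i : ℕ)
      set b := (p j : ℕ)
      set k := a - b with hk
      have hk1 : 1 ≤ k := by omega
      have hkN : k ≤ N - 1 := by omega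
      have hkr : (k : ℝ) = (a : ℝ) - (b : ℝ) := by
        rw [hk, Nat.cast_sub hgt.le]
      have hdiff : θ i - θ j = 2 * (k : ℝ) * Real.pi / N := by
        rw [hθ i, hθ j, hkr]; ring
      have hcond : (|((a : ℤ) + 1) - ((b : ℤ) + 1)| = 1 ∨
          |((a : ℤ) + 1) - ((b : ℤ) + 1)| = (N : ℤ) - 1) ↔ (k = 1 ∨ k = N - 1) := by
        rw [abs_of_nonneg (by omega : (0:ℤ) ≤ ((a : ℤ) + 1) - ((b : ℤ) + 1))]
        omega
      by_cases hadj : k = 1 ∨ k = N - 1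
      · rw [hdiff, h₁ k hadj, if_pos (hcond.mpr hadj)]
        have h0 : 2 * (k : ℝ) * Real.pi / N + -(2 * (k : ℝ) * Real.pi / N) = 0 := by ring
        rw [h0, Real.cos_zero]
      · have h2k : 2 ≤ k := by omega
        have hkN' : k ≤ N := by omega
        have hne : k ≠ N - 1 := by tauto
        rw [hdiff, h₃ k h2k hkN' hne]
        have : 2 * (k : ℝ) * Real.pi / N + (Real.pi - 2 * (k : ℝ) * Real.pi / N)
            = Real.pi := by ring
        rw [this, Real.cos_pi, if_neg (fun h => hadj (hcond.mp h))]
  have step : (∑ i, ∑ j ∈ Finset.univ.filter (fun j => i < j),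
        D i j * Real.cos (θ i - θ j + fTSP (θ i - θ j))) =
      ∑ i, ∑ j ∈ Finset.univ.filter (fun j => i < j),
        (2 * (if |(((p i : ℕ) : ℤ) + 1) - (((p j : ℕ) : ℤ) + 1)| = 1 ∨
            |(((p i : ℕ) : ℤ) + 1) - (((p j : ℕ) : ℤ) + 1)| = (N : ℤ) - 1
          then D i j else 0) - D i j) := by
    refine Finset.sum_congr rfl fun i _ => Finset.sum_congr rfl fun j hj => ?_
    have hij : i < j := (Finset.mem_filter.mp hj).2
    rw [key i j hij.ne]
    by_cases h : |(((p i : ℕ) : ℤ) + 1) - (((p j : ℕ) : ℤ) + 1)| = 1 ∨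
        |(((p i : ℕ) : ℤ) + 1) - (((p j : ℕ) : ℤ) + 1)| = (N : ℤ) - 1
    · simp only [if_pos h]; ring
    · simp only [if_neg h]; ring
  rw [step, hL]
  rw [Finset.mul_sum]
  rw [← Finset.sum_sub_distrib]
  refine Finset.sum_congr rfl fun i _ => ?_
  rw [Finset.mul_sum, ← Finset.sum_sub_distrib]
end

section
/- Fix an integer N ≥ 3 and a symmetric matrix D : Fin N → Fin N → ℝ. For a bijection p of {1, …, N} define, with θ i = 2π·p(i)/N and f_TSP as in the paper's TSP formulation (f_TSP(x) = −2γπ/N if x = 2γπ/N for γ ∈ {1, N−1}; f_TSP(x) = 2γπ/N if x = −2γπ/N for γ ∈ {1, N−1}; f_TSP(x) = π − 2kπ/N if x = 2kπ/N for an integer 2 ≤ k ≤ N with k ≠ N−1; f_TSP(x) = 2kπ/N − π if x = −2kπ/N for such k; 0 otherwise), the objective H_TSP(p) = Σ_{i<j} D i j · cos(θ i − θ j + f_TSP(θ i − θ j)) and the tour length L(p) = Σ over pairs i < j with |p(i) − p(j)| ∈ {1, N−1} of D i j. Then a bijection p minimizes H_TSP over all bijections of {1, …, N} if and only if p minimizes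 the tour length L over all bijections. -/
/-- a bijection `p` of the cities onto tour positions minimizes the
TSP objective `H_TSP` over all bijections iff it minimizes the tour length `L`. -/
theorem stmt_17 (N : ℕ) (hN : 3 ≤ N)
    (D : Fin N → Fin N → ℝ) (hD : ∀ i j, D i j = D j i)
    (fTSP : ℝ → ℝ)
    (h₁ : ∀ γ : ℕ, (γ = 1 ∨ γ = N - 1) →
      fTSP (2 * (γ : ℝ) * Real.pi / N) = -(2 * (γ : ℝ) * Real.pi / N))
    (h₂ : ∀ γ : ℕ, (γ = 1 ∨ γ = N - 1) →
      fTSP (-(2 * (γ : ℝ) * Real.pi / N)) = 2 * (γ : ℝ) * Real.pi / N)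
    (h₃ : ∀ k : ℕ, 2 ≤ k → k ≤ N → k ≠ N - 1 →
      fTSP (2 * (k : ℝ) * Real.pi / N) = Real.pi - 2 * (k : ℝ) * Real.pi / N)
    (h₄ : ∀ k : ℕ, 2 ≤ k → k ≤ N → k ≠ N - 1 →
      fTSP (-(2 * (k : ℝ) * Real.pi / N)) = 2 * (k : ℝ) * Real.pi / N - Real.pi)
    (h₀ : ∀ x : ℝ, (∀ k : ℕ, 1 ≤ k → k ≤ N →
      x ≠ 2 * (k : ℝ) * Real.pi / N ∧ x ≠ -(2 * (k : ℝ) * Real.pi / N)) → fTSP x = 0)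
    (H : Equiv.Perm (Fin N) → ℝ)
    (hH : ∀ q : Equiv.Perm (Fin N), H q =
      ∑ i, ∑ j ∈ Finset.univ.filter (fun j => i < j),
        D i j * Real.cos (2 * Real.pi * (((q i : ℕ) : ℝ) + 1) / N -
            2 * Real.pi * (((q j : ℕ) : ℝ) + 1) / N +
          fTSP (2 * Real.pi * (((q i : ℕ) : ℝ) + 1) / N -
            2 * Real.pi * (((q j : ℕ) : ℝ) + 1) / N)))
    (L : Equiv.Perm (Fin N) → ℝ)
    (hL : ∀ q : Equiv.Perm (Fin N), L q =
      ∑ i, ∑ j ∈ Finset.univ.filter (fun j => i < j),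
        if |(((q i : ℕ) : ℤ) + 1) - (((q j : ℕ) : ℤ) + 1)| = 1 ∨
           |(((q i : ℕ) : ℤ) + 1) - (((q j : ℕ) : ℤ) + 1)| = (N : ℤ) - 1
        then D i j else 0)
    (p : Equiv.Perm (Fin N)) :
    (∀ q : Equiv.Perm (Fin N), H p ≤ H q) ↔
    (∀ q : Equiv.Perm (Fin N), L p ≤ L q) := by
  -- helper: value of cos at the relevant points
  have hcos : ∀ k : ℕ, 1 ≤ k → k ≤ N - 1 →
      (Real.cos (2*(k:ℝ)*Real.pi/N + fTSP (2*(k:ℝ)*Real.pi/N))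
          = if k = 1 ∨ k = N - 1 then 1 else -1)
    ∧ (Real.cos (-(2*(k:ℝ)*Real.pi/N) + fTSP (-(2*(k:ℝ)*Real.pi/N)))
          = if k = 1 ∨ k = N - 1 then 1 else -1) := by
    intro k hk1 hkN
    by_cases h : k = 1 ∨ k = N - 1
    · rw [h₁ k h, h₂ k h, if_pos h]
      constructor
      · rw [show 2*(k:ℝ)*Real.pi/N + -(2*(k:ℝ)*Real.pi/N) = 0 from by ring, Real.cos_zero]
      · rw [show -(2*(k:ℝ)*Real.pi/N) + 2*(k:ℝ)*Real.pi/N = 0 from by ring, Real.cos_zero]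
    · push_neg at h
      have hk2 : 2 ≤ k := by omega
      have hkN' : k ≤ N := by omega
      rw [h₃ k hk2 hkN' h.2, h₄ k hk2 hkN' h.2, if_neg (by tauto)]
      constructor
      · rw [show 2*(k:ℝ)*Real.pi/N + (Real.pi - 2*(k:ℝ)*Real.pi/N) = Real.pi from by ring,
          Real.cos_pi]
      · rw [show -(2*(k:ℝ)*Real.pi/N) + (2*(k:ℝ)*Real.pi/N - Real.pi) = -Real.pi from by ring,
          Real.cos_neg, Real.cos_pi]
  -- H q = 2 * L q - S
  set S : ℝ := ∑ i, ∑ j ∈ Finset.univ.filter (fun j => i < j), D i j with hS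
  have hHL : ∀ q : Equiv.Perm (Fin N), H q = 2 * L q - S := by
    intro q
    rw [hH, hL, hS, Finset.mul_sum, ← Finset.sum_sub_distrib]
    refine Finset.sum_congr rfl fun i _ => ?_
    rw [Finset.mul_sum, ← Finset.sum_sub_distrib]
    refine Finset.sum_congr rfl fun j hj => ?_
    have hij : i ≠ j := by
      simp only [Finset.mem_filter] at hj
      exact ne_of_lt hj.2
    set a : ℕ := (q i : ℕ) with ha
    set b : ℕ := (q j : ℕ) with hb
    have haN : a < N := (q i).isLt
    have hbN : b < N := (q j).isLt
    have hab : a ≠ b := by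
      intro h
      exact hij (q.injective (Fin.ext h))
    rcases lt_or_gt_of_ne hab with hlt | hgt
    · -- a < b, x = -(2kπ/N) with k = b - a
      set k : ℕ := b - a with hk
      have hbk : b = a + k := by omega
      have hbkR : (b:ℝ) = (a:ℝ) + (k:ℝ) := by exact_mod_cast congrArg Nat.cast hbk
      have hx : 2 * Real.pi * ((a:ℝ) + 1) / N - 2 * Real.pi * ((b:ℝ) + 1) / N
          = -(2*(k:ℝ)*Real.pi/N) := by rw [hbkR]; ring
      have hcond : ((|((a:ℤ)+1) - ((b:ℤ)+1)| = 1 ∨ |((a:ℤ)+1) - ((b:ℤ)+1)| = (N:ℤ)-1))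
          ↔ (k = 1 ∨ k = N - 1) := by
        have h5 : ((a:ℤ)+1) - ((b:ℤ)+1) = -(k:ℤ) := by omega
        rw [h5, abs_neg, abs_of_nonneg (Int.natCast_nonneg k)]
        omega
      rw [hx, (hcos k (by omega) (by omega)).2]
      rw [if_congr hcond rfl rfl]
      split_ifs <;> ring
    · set k : ℕ := a - b with hk
      have hbk : a = b + k := by omega
      have hbkR : (a:ℝ) = (b:ℝ) + (k:ℝ) := by exact_mod_cast congrArg Nat.cast hbk
      have hx : 2 * Real.pi * ((a:ℝ) + 1) / N - 2 * Real.pi * ((b:ℝ) + 1) / N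
          = 2*(k:ℝ)*Real.pi/N := by rw [hbkR]; ring
      have hcond : ((|((a:ℤ)+1) - ((b:ℤ)+1)| = 1 ∨ |((a:ℤ)+1) - ((b:ℤ)+1)| = (N:ℤ)-1))
          ↔ (k = 1 ∨ k = N - 1) := by
        have h5 : ((a:ℤ)+1) - ((b:ℤ)+1) = (k:ℤ) := by omega
        rw [h5, abs_of_nonneg (Int.natCast_nonneg k)]
        omega
      rw [hx, (hcos k (by omega) (by omega)).1]
      rw [if_congr hcond rfl rfl]
      split_ifs <;> ring
  constructor
  · intro h q
    have := h q
    rw [hHL p, hHL q] at this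
    linarith
  · intro h q
    have := h q
    rw [hHL p, hHL q]
    linarith
end
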